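/- Independence introduction / quantifier swap (rule 7): ∀x ∃y (φ ∧ x ⊥_z y) is logically equivalent to ∃y ∀x φ, where z is a tuple listing all the variables in Fr(φ) \ {x, y}. -/

import Mathlib

open FirstOrder Language

/-- Formulas of independence logic over a first-order language `L`, with variables `ℕ`:
first-order formulas, conditional independence atoms `t1 ⊥_{t3} t2` (written
`indep t1 t2 t3`) between tuples (lists) of terms, conjunction, disjunction, and
existential and universal quantification. -/
inductive TeamFormula (L : Language) : Type _ where
  | fo (φ : L.Formula ℕ)
  | indep (t1 t2 t3 : List (L.Term ℕ))
  | and (φ ψ : TeamFormula L)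
  | or (φ ψ : TeamFormula L)
  | ex (x : ℕ) (φ : TeamFormula L)
  | all (x : ℕ) (φ : TeamFormula L)

namespace TeamFormula

variable {L : Language}

/-- The set of free variables of an independence-logic formula. -/
def Fr : TeamFormula L → Set ℕ
  | .fo φ => ↑φ.freeVarFinset
  | .indep t1 t2 t3 => ↑((t1 ++ t2 ++ t3).foldr (fun t s => t.varFinset ∪ s) ∅)
  | .and φ ψ => φ.Fr ∪ ψ.Fr
  | .or φ ψ => φ.Fr ∪ ψ.Fr
  | .ex x φ => φ.Fr \ {x}
  | .all x φ => φ.Fr \ {x}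

/-- A team is a set of assignments. -/
abbrev Team (M : Type*) := Set (ℕ → M)

/-- The value of a tuple (list) of terms under an assignment. -/
def listVal {M : Type*} [L.Structure M] (ts : List (L.Term ℕ)) (s : ℕ → M) : List M :=
  ts.map fun t => t.realize s

/-- Lax team semantics for independence logic.  First-order formulas are evaluated
pointwise; disjunction splits the team into a union; `∃x φ` is witnessed by a function
`F` from the team to nonempty sets of elements, extending the team to
`X(F/x) = {s(a/x) : s ∈ X, a ∈ F s}`; `∀x φ` duplicates the team to `X(M/x)`. -/
def Sat (M : Type*) [L.Structure M] : TeamFormula L → Team M → Prop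
  | .fo φ, X => ∀ s ∈ X, φ.Realize s
  | .indep t1 t2 t3, X => ∀ s ∈ X, ∀ s' ∈ X, listVal t3 s = listVal t3 s' →
      ∃ s'' ∈ X, listVal t1 s'' = listVal t1 s ∧ listVal t3 s'' = listVal t3 s ∧
        listVal t2 s'' = listVal t2 s'
  | .and φ ψ, X => φ.Sat M X ∧ ψ.Sat M X
  | .or φ ψ, X => ∃ Y Z : Team M, Y ∪ Z = X ∧ φ.Sat M Y ∧ ψ.Sat M Z
  | .ex x φ, X => ∃ F : (ℕ → M) → Set M, (∀ s ∈ X, (F s).Nonempty) ∧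
      φ.Sat M {s' | ∃ s ∈ X, ∃ a ∈ F s, s' = Function.update s x a}
  | .all x φ, X => φ.Sat M {s' | ∃ s ∈ X, ∃ a : M, s' = Function.update s x a}

end TeamFormula

open FirstOrder Language

/-! Satisfaction of `φ` depends only on the restriction of a team to a superset of `Fr(φ)`,
here `{x, y} ∪ z`, so both directions compare two teams on these variables.

From left to right, with `G` the witness for `y` on `X(M/x)`, pool the values found for the
various values of `x`: `F s = ⋃ₐ G (s(a/x))`. The atom `x ⊥_z y` says that each pooled value
already occurs together with every value of `x` (and the same values of `z`), so `X(F/y)(M/x)`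
and `X(M/x)(G/y)` agree on `{x, y} ∪ z`.

From right to left, choose `y` on `X(M/x)` by pooling `F` over all assignments of `X` that
agree on `z`. This choice depends on `z` only, which gives both `φ` (by locality) and `x ⊥_z y`.
-/

namespace FirstOrder.Language

variable {L : Language} {M α : Type*} [L.Structure M] [DecidableEq α]

theorem Term.realize_eq_of_eqOn {t : L.Term α} {v w : α → M} (h : Set.EqOn v w t.varFinset) :
    t.realize v = t.realize w :=
  (realize_restrictVar (f := Subtype.val) v fun _ => rfl).symm.trans
    (realize_restrictVar w fun a => h a.2)

theorem Formula.realize_iff_of_eqOn {φ : L.Formula α} {v w : α → M}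
    (h : Set.EqOn v w φ.freeVarFinset) : φ.Realize v ↔ φ.Realize w :=
  (BoundedFormula.realize_restrictFreeVar (f := Subtype.val) v fun _ => rfl).symm.trans
    (BoundedFormula.realize_restrictFreeVar w fun a => h a.2)

end FirstOrder.Language

namespace Set

theorem eqOn_insert_iff {α β : Type*} {f g : α → β} {a : α} {s : Set α} :
    EqOn f g (insert a s) ↔ f a = g a ∧ EqOn f g s :=
  forall_mem_insert

theorem EqOn.update {α β : Type*} [DecidableEq α] {f g : α → β} {s : Set α}
    (h : EqOn f g s) (a : α) (b : β) :
    EqOn (Function.update f a b) (Function.update g a b) (insert a s) := by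
  refine eqOn_insert_iff.2 ⟨by simp, fun v hv => ?_⟩
  by_cases hva : v = a
  · simp [hva]
  · simp [Function.update_of_ne hva, h hv]

theorem eqOn_update_of_notMem {α β : Type*} [DecidableEq α] {f : α → β} {s : Set α}
    {a : α} (ha : a ∉ s) (b : β) : EqOn f (Function.update f a b) s :=
  fun _ hv => (Function.update_of_ne (ne_of_mem_of_not_mem hv ha) b f).symm

end Set

namespace TeamFormula

open Function Set

variable {L : Language} {M : Type*} [L.Structure M]

namespace Team

def duplicate (X : Team M) (x : ℕ) : Team M :=
  {s' | ∃ s ∈ X, ∃ a : M, s' = update s x a}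

def supplement (X : Team M) (x : ℕ) (F : (ℕ → M) → Set M) : Team M :=
  {s' | ∃ s ∈ X, ∃ a ∈ F s, s' = update s x a}

def AgreeOn (V : Set ℕ) (X Y : Team M) : Prop :=
  (∀ s ∈ X, ∃ t ∈ Y, EqOn s t V) ∧ (∀ t ∈ Y, ∃ s ∈ X, EqOn s t V)

/-- The team satisfies the independence atom `x ⊥_Z y`. -/
def IsIndep (X : Team M) (x y : ℕ) (Z : Set ℕ) : Prop :=
  ∀ s ∈ X, ∀ s' ∈ X, EqOn s s' Z → ∃ s'' ∈ X, s'' x = s x ∧ EqOn s'' s Z ∧ s'' y = s' y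

def classUnion (X : Team M) (V : Set ℕ) (F : (ℕ → M) → Set M) (t : ℕ → M) : Set M :=
  {a | ∃ s ∈ X, EqOn s t V ∧ a ∈ F s}

variable {V : Set ℕ} {X Y : Team M}

theorem AgreeOn.duplicate (h : AgreeOn V X Y) (x : ℕ) :
    AgreeOn (insert x V) (X.duplicate x) (Y.duplicate x) := by
  constructor
  · rintro _ ⟨s, hs, a, rfl⟩
    obtain ⟨t, ht, hst⟩ := h.1 s hs
    exact ⟨_, ⟨t, ht, a, rfl⟩, hst.update x a⟩
  · rintro _ ⟨t, ht, a, rfl⟩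
    obtain ⟨s, hs, hst⟩ := h.2 t ht
    exact ⟨_, ⟨s, hs, a, rfl⟩, hst.update x a⟩

theorem classUnion_nonempty {F : (ℕ → M) → Set M} (hF : ∀ s ∈ X, (F s).Nonempty)
    {s t : ℕ → M} (hs : s ∈ X) (hst : EqOn s t V) : (X.classUnion V F t).Nonempty :=
  let ⟨a, ha⟩ := hF s hs
  ⟨a, s, hs, hst, ha⟩

theorem AgreeOn.supplement_classUnion (h : AgreeOn V X Y) (x : ℕ) (F : (ℕ → M) → Set M) :
    AgreeOn (insert x V) (X.supplement x F) (Y.supplement x (X.classUnion V F)) := by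
  constructor
  · rintro _ ⟨s, hs, a, ha, rfl⟩
    obtain ⟨t, ht, hst⟩ := h.1 s hs
    exact ⟨_, ⟨t, ht, a, ⟨s, hs, hst, ha⟩, rfl⟩, hst.update x a⟩
  · rintro _ ⟨t, ht, a, ⟨s, hs, hst, ha⟩, rfl⟩
    exact ⟨_, ⟨s, hs, a, ha, rfl⟩, hst.update x a⟩

theorem AgreeOn.restrict (h : AgreeOn V X Y) {X' : Team M} (hX' : X' ⊆ X) :
    AgreeOn V X' {t ∈ Y | ∃ s ∈ X', EqOn s t V} := by
  constructor
  · intro s hs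
    obtain ⟨t, ht, hst⟩ := h.1 s (hX' hs)
    exact ⟨t, ⟨ht, s, hs, hst⟩, hst⟩
  · rintro t ⟨-, hX't⟩
    exact hX't

theorem AgreeOn.exists_union_eq {X₁ X₂ : Team M} (h : AgreeOn V (X₁ ∪ X₂) Y) :
    ∃ Y₁ Y₂ : Team M, Y₁ ∪ Y₂ = Y ∧ AgreeOn V X₁ Y₁ ∧ AgreeOn V X₂ Y₂ := by
  refine ⟨_, _, ?_, h.restrict subset_union_left, h.restrict subset_union_right⟩
  ext t
  constructor
  · rintro (⟨ht, -⟩ | ⟨ht, -⟩) <;> exact ht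
  · intro ht
    obtain ⟨s, hs | hs, hst⟩ := h.2 t ht
    · exact Or.inl ⟨ht, s, hs, hst⟩
    · exact Or.inr ⟨ht, s, hs, hst⟩

end Team

open Team

theorem sat_all {x : ℕ} {φ : TeamFormula L} {X : Team M} :
    (all x φ).Sat M X ↔ φ.Sat M (X.duplicate x) :=
  Iff.rfl

theorem sat_ex {x : ℕ} {φ : TeamFormula L} {X : Team M} :
    (ex x φ).Sat M X ↔
      ∃ F : (ℕ → M) → Set M, (∀ s ∈ X, (F s).Nonempty) ∧ φ.Sat M (X.supplement x F) :=
  Iff.rfl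

theorem sat_and {φ ψ : TeamFormula L} {X : Team M} :
    (φ.and ψ).Sat M X ↔ φ.Sat M X ∧ ψ.Sat M X :=
  Iff.rfl

theorem mem_foldr_varFinset {ts : List (L.Term ℕ)} {a : ℕ} :
    a ∈ ts.foldr (fun t s => (t.varFinset : Set ℕ) ∪ s) ∅ ↔ ∃ t ∈ ts, a ∈ t.varFinset := by
  induction ts with
  | nil => simp
  | cons t ts ih => simp [ih]

theorem mem_fr_indep {t₁ t₂ t₃ : List (L.Term ℕ)} {a : ℕ} :
    a ∈ (indep t₁ t₂ t₃).Fr ↔ ∃ t ∈ t₁ ++ t₂ ++ t₃, a ∈ t.varFinset := by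
  rw [Fr, mem_foldr_varFinset]

theorem listVal_eq_of_eqOn {ts : List (L.Term ℕ)} {v w : ℕ → M}
    (h : ∀ t ∈ ts, EqOn v w t.varFinset) : listVal ts v = listVal ts w :=
  List.map_congr_left fun t ht => Term.realize_eq_of_eqOn (h t ht)

theorem sat_indep_of_agreeOn {t₁ t₂ t₃ : List (L.Term ℕ)} {V : Set ℕ} {X Y : Team M}
    (hV : (indep t₁ t₂ t₃).Fr ⊆ V) (h : AgreeOn V X Y) (hX : (indep t₁ t₂ t₃).Sat M X) :
    (indep t₁ t₂ t₃).Sat M Y := by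
  have val_eq : ∀ ts ⊆ t₁ ++ t₂ ++ t₃, ∀ {v w : ℕ → M}, EqOn v w V →
      listVal ts v = listVal ts w := fun ts hts v w hvw =>
    listVal_eq_of_eqOn fun t ht => hvw.mono fun a ha =>
      hV (mem_fr_indep.2 ⟨t, hts ht, ha⟩)
  have h₁ : t₁ ⊆ t₁ ++ t₂ ++ t₃ := fun t ht => by simp [ht]
  have h₂ : t₂ ⊆ t₁ ++ t₂ ++ t₃ := fun t ht => by simp [ht]
  have h₃ : t₃ ⊆ t₁ ++ t₂ ++ t₃ := fun t ht => by simp [ht]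
  intro s hs s' hs' hss'
  obtain ⟨u, hu, hus⟩ := h.2 s hs
  obtain ⟨u', hu', hus'⟩ := h.2 s' hs'
  obtain ⟨w, hw, hw₁, hw₃, hw₂⟩ :=
    hX u hu u' hu' (by rw [val_eq t₃ h₃ hus, val_eq t₃ h₃ hus', hss'])
  obtain ⟨t, ht, hwt⟩ := h.1 w hw
  refine ⟨t, ht, ?_, ?_, ?_⟩
  · rw [← val_eq t₁ h₁ hwt, hw₁, val_eq t₁ h₁ hus]
  · rw [← val_eq t₃ h₃ hwt, hw₃, val_eq t₃ h₃ hus]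
  · rw [← val_eq t₂ h₂ hwt, hw₂, val_eq t₂ h₂ hus']

theorem Sat.of_agreeOn {φ : TeamFormula L} {V : Set ℕ} {X Y : Team M} (hV : φ.Fr ⊆ V)
    (h : AgreeOn V X Y) (hX : φ.Sat M X) : φ.Sat M Y := by
  induction φ generalizing V X Y with
  | fo ψ =>
    intro t ht
    obtain ⟨s, hs, hst⟩ := h.2 t ht
    exact (Formula.realize_iff_of_eqOn (hst.mono hV)).1 (hX s hs)
  | indep t₁ t₂ t₃ => exact sat_indep_of_agreeOn hV h hX
  | and φ ψ ihφ ihψ =>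
    exact ⟨ihφ (subset_union_left.trans hV) h hX.1, ihψ (subset_union_right.trans hV) h hX.2⟩
  | or φ ψ ihφ ihψ =>
    obtain ⟨X₁, X₂, rfl, h₁, h₂⟩ := hX
    obtain ⟨Y₁, Y₂, rfl, hY₁, hY₂⟩ := h.exists_union_eq
    exact ⟨Y₁, Y₂, rfl, ihφ (subset_union_left.trans hV) hY₁ h₁,
      ihψ (subset_union_right.trans hV) hY₂ h₂⟩
  | ex x φ ih =>
    obtain ⟨F, hF, hφ⟩ := sat_ex.1 hX
    refine sat_ex.2 ⟨X.classUnion V F, fun t ht => ?_, ih ?_ (h.supplement_classUnion x F) hφ⟩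
    · obtain ⟨s, hs, hst⟩ := h.2 t ht
      exact classUnion_nonempty hF hs hst
    · exact sdiff_subset_iff.1 hV
  | all x φ ih => exact ih (sdiff_subset_iff.1 hV) (h.duplicate x) hX

theorem sat_indep_var_iff {x y : ℕ} {z : List ℕ} {X : Team M} :
    (indep [Term.var x] [Term.var y] (z.map Term.var) : TeamFormula L).Sat M X ↔
      X.IsIndep x y ↑z.toFinset := by
  have listVal_z : ∀ s s' : ℕ → M, listVal (z.map Term.var : List (L.Term ℕ)) s =
      listVal (z.map Term.var : List (L.Term ℕ)) s' ↔ EqOn s s' ↑z.toFinset := by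
    simp [listVal, EqOn, List.map_inj_left]
  simp only [Sat, IsIndep, listVal_z]
  simp [listVal]

section Swap

variable {X : Team M} {x y : ℕ} {Z : Set ℕ}

theorem eqOn_update_update (hx : x ∉ Z) (hy : y ∉ Z) (s : ℕ → M) (a b : M) :
    EqOn s (update (update s x a) y b) Z :=
  (eqOn_update_of_notMem hx a).trans (eqOn_update_of_notMem hy b)

theorem agreeOn_supplement_duplicate_of_isIndep (hxy : x ≠ y) (hx : x ∉ Z) (hy : y ∉ Z)
    {G : (ℕ → M) → Set M} (hG : ∀ r ∈ X.duplicate x, (G r).Nonempty)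
    (hind : ((X.duplicate x).supplement y G).IsIndep x y Z) :
    AgreeOn (insert x (insert y Z)) ((X.duplicate x).supplement y G)
      ((X.supplement y fun s => ⋃ a, G (update s x a)).duplicate x) := by
  constructor
  · rintro _ ⟨_, ⟨s, hs, a, rfl⟩, b, hb, rfl⟩
    refine ⟨_, ⟨_, ⟨s, hs, b, mem_iUnion.2 ⟨a, hb⟩, rfl⟩, a, rfl⟩, ?_⟩
    rw [update_comm hxy]
    exact eqOn_refl _ _
  · rintro _ ⟨_, ⟨s, hs, b, hb, rfl⟩, a, rfl⟩
    obtain ⟨a', hb⟩ := mem_iUnion.1 hb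
    obtain ⟨b', hb'⟩ := hG _ ⟨s, hs, a, rfl⟩
    -- `x ⊥_Z y` makes `b`, found next to `x = a'`, occur next to `x = a` as well
    obtain ⟨w, hw, hwx, hwZ, hwy⟩ := hind
      (update (update s x a) y b') ⟨_, ⟨s, hs, a, rfl⟩, b', hb', rfl⟩
      (update (update s x a') y b) ⟨_, ⟨s, hs, a', rfl⟩, b, hb, rfl⟩
      ((eqOn_update_update hx hy s a b').symm.trans (eqOn_update_update hx hy s a' b))
    refine ⟨w, hw, eqOn_insert_iff.2 ⟨?_, eqOn_insert_iff.2 ⟨?_, ?_⟩⟩⟩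
    · simp [hwx, hxy]
    · simp [hwy, hxy.symm]
    · rw [← update_comm hxy]
      exact hwZ.trans
        ((eqOn_update_update hx hy s a b').symm.trans (eqOn_update_update hx hy s a b))

theorem agreeOn_duplicate_supplement_classUnion (hxy : x ≠ y) (hx : x ∉ Z)
    (F : (ℕ → M) → Set M) :
    AgreeOn (insert x (insert y Z)) ((X.supplement y F).duplicate x)
      ((X.duplicate x).supplement y (X.classUnion Z F)) := by
  constructor
  · rintro _ ⟨_, ⟨s, hs, b, hb, rfl⟩, a, rfl⟩
    refine ⟨_, ⟨_, ⟨s, hs, a, rfl⟩, b, ⟨s, hs, eqOn_update_of_notMem hx a, hb⟩, rfl⟩, ?_⟩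
    rw [update_comm hxy]
    exact eqOn_refl _ _
  · rintro _ ⟨_, ⟨s, hs, a, rfl⟩, b, ⟨t, ht, hts, hb⟩, rfl⟩
    refine ⟨_, ⟨_, ⟨t, ht, b, hb, rfl⟩, a, rfl⟩, ?_⟩
    rw [update_comm hxy]
    exact ((hts.trans (eqOn_update_of_notMem hx a).symm).update y b).update x a

theorem isIndep_supplement_classUnion (hxy : x ≠ y) (hx : x ∉ Z) (hy : y ∉ Z)
    (F : (ℕ → M) → Set M) :
    ((X.duplicate x).supplement y (X.classUnion Z F)).IsIndep x y Z := by
  rintro _ ⟨_, ⟨s₁, hs₁, a₁, rfl⟩, b₁, -, rfl⟩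
    _ ⟨_, ⟨s₂, -, a₂, rfl⟩, b₂, ⟨t, ht, hts₂, hb₂⟩, rfl⟩ h₁₂
  have hs₁₂ : EqOn s₁ s₂ Z :=
    (eqOn_update_update hx hy s₁ a₁ b₁).trans
      (h₁₂.trans (eqOn_update_update hx hy s₂ a₂ b₂).symm)
  have hts₁ : EqOn t (update s₁ x a₁) Z :=
    hts₂.trans ((eqOn_update_of_notMem hx a₂).symm.trans
      (hs₁₂.symm.trans (eqOn_update_of_notMem hx a₁)))
  refine ⟨update (update s₁ x a₁) y b₂, ⟨_, ⟨s₁, hs₁, a₁, rfl⟩, b₂, ⟨t, ht, hts₁, hb₂⟩, rfl⟩,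
    by simp [hxy], ?_, by simp⟩
  exact (eqOn_update_update hx hy s₁ a₁ b₂).symm.trans (eqOn_update_update hx hy s₁ a₁ b₁)

end Swap

end TeamFormula

/-- independence introduction / quantifier swap (rule 7):
`∀x ∃y (φ ∧ x ⊥_z y)` is logically equivalent to `∃y ∀x φ`, where `z` is a tuple
listing all the variables in `Fr(φ) \ {x, y}`. -/
theorem TeamFormula.indep_introduction {L : Language} {M : Type*} [L.Structure M]
    (φ : TeamFormula L) (x y : ℕ) (z : List ℕ) (hxy : x ≠ y)
    (hz : (↑z.toFinset : Set ℕ) = φ.Fr \ {x, y}) :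
    ∀ X : TeamFormula.Team M,
      (TeamFormula.all x (TeamFormula.ex y (φ.and
          (TeamFormula.indep [Term.var x] [Term.var y] (z.map Term.var))))).Sat M X ↔
      (TeamFormula.ex y (TeamFormula.all x φ)).Sat M X := by
  intro X
  have hx : x ∉ (↑z.toFinset : Set ℕ) := fun h => (hz ▸ h).2 (Or.inl rfl)
  have hy : y ∉ (↑z.toFinset : Set ℕ) := fun h => (hz ▸ h).2 (Or.inr rfl)
  have hFr : φ.Fr ⊆ insert x (insert y ↑z.toFinset) := by
    rw [hz]
    intro a ha
    simp only [Set.mem_insert_iff, Set.mem_sdiff, Set.mem_singleton_iff]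
    tauto
  simp only [sat_all, sat_ex, sat_and]
  constructor
  · rintro ⟨G, hG, hφ, hind⟩
    refine ⟨_, fun s hs => ?_, hφ.of_agreeOn hFr
      (agreeOn_supplement_duplicate_of_isIndep hxy hx hy hG (sat_indep_var_iff.1 hind))⟩
    exact (hG _ ⟨s, hs, s x, rfl⟩).mono (Set.subset_iUnion (fun a => G (Function.update s x a)) _)
  · rintro ⟨F, hF, hφ⟩
    refine ⟨X.classUnion _ F, ?_,
      hφ.of_agreeOn hFr (agreeOn_duplicate_supplement_classUnion hxy hx F),
      sat_indep_var_iff.2 (isIndep_supplement_classUnion hxy hx hy F)⟩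
    rintro _ ⟨s, hs, a, rfl⟩
    exact Team.classUnion_nonempty hF hs (Set.eqOn_update_of_notMem hx a)
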